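/- Let α ∈ ℂ*, q ≥ 1, and let τ = Λ/(t−α)^q where Λ = ℂ[t,t⁻¹]. Let n ≥ 2 with q ≤ n−2. If Φ : τ → ℂ^{n-1} is a ℂ-linear map to row vectors satisfying Φ(t·y) = α·Φ(y)·J⁻¹ for all y ∈ τ, where J is the (n-1)×(n-1) unipotent Jordan block, then the first component φ₁ of Φ is identically zero. -/
import Mathlib


open LaurentPolynomial

/-- The m×m nilpotent matrix with 1's on the superdiagonal. -/
def Nmat (m : ℕ) : Matrix (Fin m) (Fin m) ℂ :=
  Matrix.of fun i j => if (i : ℕ) + 1 = (j : ℕ) then 1 else 0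

lemma Nmat_pow_apply (m k : ℕ) (i j : Fin m) :
    ((Nmat m) ^ k) i j = if (i : ℕ) + k = (j : ℕ) then 1 else 0 := by
  induction k generalizing j with
  | zero => simp [Matrix.one_apply, Fin.ext_iff]
  | succ k ih =>
    rw [pow_succ, Matrix.mul_apply]
    have hterm : ∀ l : Fin m, (Nmat m ^ k) i l * Nmat m l j
        = (if (i : ℕ) + k = (l : ℕ) then 1 else 0) * (if (l : ℕ) + 1 = (j : ℕ) then 1 else 0) := by
      intro l; rw [ih]; rfl
    rw [Finset.sum_congr rfl (fun l _ => hterm l)]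
    by_cases h : (i : ℕ) + k < m
    · rw [Finset.sum_eq_single (⟨(i : ℕ) + k, h⟩ : Fin m)]
      · simp [← add_assoc]
      · intro b _ hb
        rw [if_neg, zero_mul]
        intro hc
        exact hb (Fin.ext hc.symm)
      · simp
    · have h2 : ¬ ((i : ℕ) + (k + 1) = (j : ℕ)) := by
        have := j.isLt; omega
      rw [if_neg h2]
      apply Finset.sum_eq_zero
      intro b _
      rw [if_neg (by have := b.isLt; omega), zero_mul]

lemma commute_Nmat (m : ℕ) : Commute (Nmat m) (1 + Nmat m) :=
  (Commute.one_right _).add_right (Commute.refl _)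

theorem stmt5 (n q : ℕ) (hn : 2 ≤ n) (hq : 1 ≤ q) (hqn : q ≤ n - 2)
    (α : ℂ) (hα : α ≠ 0)
    (Φ : (LaurentPolynomial ℂ ⧸
        Ideal.span {((T 1 - C α) ^ q : LaurentPolynomial ℂ)}) →ₗ[ℂ] (Fin (n - 1) → ℂ))
    (hΦ : ∀ y, Φ (Ideal.Quotient.mk _ (T 1 : LaurentPolynomial ℂ) * y)
        = α • Matrix.vecMul (Φ y) (1 + Nmat (n - 1))⁻¹) :
    ∀ y, Φ y ⟨0, by omega⟩ = 0 := by
  intro y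
  have hdet : (1 + Nmat (n - 1)).det = 1 := by
    have htri : (1 + Nmat (n - 1)).BlockTriangular id := by
      intro i j hij
      have hji : (j : ℕ) < (i : ℕ) := hij
      simp only [Matrix.add_apply, Matrix.one_apply, Nmat, Matrix.of_apply]
      rw [if_neg (Fin.ne_of_val_ne (by omega)), if_neg (by omega), add_zero]
    rw [Matrix.det_of_upperTriangular htri]
    apply Finset.prod_eq_one
    intro i _
    simp [Nmat, Matrix.add_apply, Matrix.one_apply]
  have hinv : (1 + Nmat (n - 1))⁻¹ * (1 + Nmat (n - 1)) = 1 :=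
    Matrix.nonsing_inv_mul _ (by rw [hdet]; exact isUnit_one)
  have hCα : ∀ z : LaurentPolynomial ℂ ⧸
      Ideal.span {((T 1 - C α) ^ q : LaurentPolynomial ℂ)},
      Ideal.Quotient.mk _ (C α : LaurentPolynomial ℂ) * z = α • z := fun z =>
    (Algebra.smul_def α z).symm
  -- single step
  have step : ∀ z, Matrix.vecMul
      (Φ (Ideal.Quotient.mk _ ((T 1 - C α : LaurentPolynomial ℂ)) * z)) (1 + Nmat (n - 1))
      = (-α) • Matrix.vecMul (Φ z) (Nmat (n - 1)) := by
    intro z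
    have hz : Ideal.Quotient.mk _ ((T 1 - C α : LaurentPolynomial ℂ)) * z
        = Ideal.Quotient.mk _ (T 1 : LaurentPolynomial ℂ) * z - α • z := by
      rw [map_sub, sub_mul, hCα]
    rw [hz, map_sub, map_smul, Matrix.sub_vecMul, hΦ, Matrix.smul_vecMul,
      Matrix.smul_vecMul, Matrix.vecMul_vecMul, hinv, Matrix.vecMul_one,
      Matrix.vecMul_add, Matrix.vecMul_one, smul_add]
    module
  -- iterate
  have key : ∀ (k : ℕ) (z), Matrix.vecMul
      (Φ (Ideal.Quotient.mk _ (((T 1 - C α : LaurentPolynomial ℂ)) ^ k) * z))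
        ((1 + Nmat (n - 1)) ^ k)
      = ((-α) ^ k) • Matrix.vecMul (Φ z) ((Nmat (n - 1)) ^ k) := by
    intro k
    induction k with
    | zero => intro z; simp
    | succ k ih =>
      intro z
      have h1 := ih (Ideal.Quotient.mk _ ((T 1 - C α : LaurentPolynomial ℂ)) * z)
      have h2 : Ideal.Quotient.mk _ (((T 1 - C α : LaurentPolynomial ℂ)) ^ k)
          * (Ideal.Quotient.mk _ ((T 1 - C α : LaurentPolynomial ℂ)) * z)
          = Ideal.Quotient.mk _ (((T 1 - C α : LaurentPolynomial ℂ)) ^ (k + 1)) * z := by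
        rw [← mul_assoc, ← map_mul, ← pow_succ]
      rw [h2] at h1
      have h3 := congrArg (fun v => Matrix.vecMul v (1 + Nmat (n - 1))) h1
      simp only [Matrix.vecMul_vecMul, Matrix.smul_vecMul] at h3
      rw [← pow_succ] at h3
      rw [h3]
      have hcomm : (Nmat (n - 1)) ^ k * (1 + Nmat (n - 1))
          = (1 + Nmat (n - 1)) * (Nmat (n - 1)) ^ k := ((commute_Nmat (n - 1)).pow_left k).eq
      rw [hcomm, ← Matrix.vecMul_vecMul, step z, Matrix.smul_vecMul,
        Matrix.vecMul_vecMul, ← pow_succ', smul_smul, ← pow_succ]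
  -- the relator maps to zero
  have hzero : Ideal.Quotient.mk
      (Ideal.span {((T 1 - C α) ^ q : LaurentPolynomial ℂ)})
      (((T 1 - C α : LaurentPolynomial ℂ)) ^ q) = 0 := by
    rw [Ideal.Quotient.eq_zero_iff_mem]
    exact Ideal.mem_span_singleton_self _
  have h4 := key q y
  rw [hzero, zero_mul, map_zero, Matrix.zero_vecMul] at h4
  have h5 : Matrix.vecMul (Φ y) ((Nmat (n - 1)) ^ q) = 0 := by
    have hne : ((-α) ^ q : ℂ) ≠ 0 := pow_ne_zero _ (neg_ne_zero.mpr hα)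
    have h4s := h4.symm
    rwa [smul_eq_zero, or_iff_right hne] at h4s
  have hqlt : q < n - 1 := by omega
  have h6 := congrFun h5 ⟨q, hqlt⟩
  simp only [Matrix.vecMul, dotProduct, Nmat_pow_apply, Pi.zero_apply] at h6
  have hiff : ∀ i : Fin (n - 1), ((i : ℕ) + q = ((⟨q, hqlt⟩ : Fin (n - 1)) : ℕ))
      ↔ i = (⟨0, by omega⟩ : Fin (n - 1)) := by
    intro i; rw [Fin.ext_iff]; simp
  have h7 : ∀ i : Fin (n - 1),
      Φ y i * (if (i : ℕ) + q = ((⟨q, hqlt⟩ : Fin (n - 1)) : ℕ) then (1 : ℂ) else 0)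
      = if i = (⟨0, by omega⟩ : Fin (n - 1)) then Φ y i else 0 := by
    intro i
    rw [mul_ite, mul_one, mul_zero]
    simp only [hiff]
  rw [Finset.sum_congr rfl (fun i _ => h7 i), Finset.sum_ite_eq'] at h6
  simpa using h6
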